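/- Let μ satisfy Assumption 1, let t > 1, and let E ∈ ℝ \ supp(μ) be a zero of m_μ. Then there exists a constant M > 0 such that |ω_t(z) − E| ≥ M for every z ∈ ℝ (where ω_t denotes the continuous extension of the subordination function to the real line). -/

import Mathlib

open MeasureTheory Topology Filter Set

noncomputable section

/-- The open upper half-plane ℂ⁺. -/
def UHP : Set ℂ := {z : ℂ | 0 < z.im}

/-- The closed upper half-plane ℂ⁺ ∪ ℝ. -/
def CUHP : Set ℂ := {z : ℂ | 0 ≤ z.im}

/-- Cauchy–Stieltjes transform `m_μ(z) = ∫ 1/(x−z) dμ(x)`. -/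
def stT (μ : Measure ℝ) (z : ℂ) : ℂ := ∫ x, ((x : ℂ) - z)⁻¹ ∂μ

/-- Real-valued Cauchy–Stieltjes transform at real points (outside the support). -/
def stTR (μ : Measure ℝ) (E : ℝ) : ℝ := ∫ x, (x - E)⁻¹ ∂μ

/-- Negative reciprocal Cauchy–Stieltjes transform `F_μ = −1/m_μ`. -/
def nrT (μ : Measure ℝ) (z : ℂ) : ℂ := -(stT μ z)⁻¹

/-- Support of a Borel measure on ℝ (the smallest closed set of full measure). -/
def msupp (μ : Measure ℝ) : Set ℝ := {x : ℝ | ∀ ε > 0, 0 < μ (Set.Ioo (x - ε) (x + ε))}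

/-- Absolutely continuous part of μ with respect to Lebesgue measure. -/
def acPart (μ : Measure ℝ) : Measure ℝ := volume.withDensity (μ.rnDeriv volume)

/-- `I_μ(ω) = ∫ 1/|x−ω|² dμ(x)`. -/
def Ifun (μ : Measure ℝ) (w : ℂ) : ℝ := ∫ x, (Complex.normSq ((x : ℂ) - w))⁻¹ ∂μ

/-- A sequence of the upper half-plane converging non-tangentially to `E ∈ ℝ`. -/
def NonTangentialSeq (z : ℕ → ℂ) (E : ℝ) : Prop :=
  (∀ n, z n ∈ UHP) ∧ Tendsto z atTop (𝓝 (E : ℂ)) ∧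
    ∃ C : ℝ, ∀ n, |(z n).re - E| ≤ C * (z n).im

/-- The density `ρ_μ` of the a.c. part of `μ` vanishes at `x`
(via the Stieltjes inversion formula). -/
def densityVanishesAt (μ : Measure ℝ) (x : ℝ) : Prop :=
  Tendsto (fun η : ℝ => (stT μ ((x : ℂ) + (η : ℂ) * Complex.I)).im) (𝓝[>] 0) (𝓝 0)

/-- The density `ρ_μ` of the a.c. part of `μ` diverges at `x`. -/
def densityDivergesAt (μ : Measure ℝ) (x : ℝ) : Prop :=
  Tendsto (fun η : ℝ => (stT μ ((x : ℂ) + (η : ℂ) * Complex.I)).im) (𝓝[>] 0) atTop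

/-- Assumption 1. -/
structure Assumption1 (μ : Measure ℝ) (nac npp nppout : ℕ)
    (Em Ep : Fin nac → ℝ) (atom : Fin npp → ℝ) (ρ : ℝ → ℝ) : Prop where
  prob : IsProbabilityMeasure μ
  compact : IsCompact (msupp μ)
  nac_pos : 1 ≤ nac
  npp_pos : 1 ≤ npp
  ρ_nonneg : ∀ x, 0 ≤ ρ x
  ac_density : acPart μ = volume.withDensity fun x => ENNReal.ofReal (ρ x)
  sing_atomic : μ.singularPart volume = ∑ j : Fin npp, μ {atom j} • Measure.dirac (atom j)
  atom_inj : Function.Injective atom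
  atom_pos : ∀ j, 0 < μ {atom j}
  lt : ∀ j, Em j < Ep j
  ordered : ∀ i j : Fin nac, i < j → Ep i < Em j
  supp_ac : msupp (acPart μ) = ⋃ j, Set.Icc (Em j) (Ep j)
  out_card : Nat.card {j : Fin npp // atom j ∉ msupp (acPart μ)} = nppout
  no_atom_endpoint : ∀ j i, atom j ≠ Em i ∧ atom j ≠ Ep i
  power_law : ∀ j, ∃ tm tp C : ℝ, -1 < tm ∧ tm < 1 ∧ -1 < tp ∧ tp < 1 ∧ 1 ≤ C ∧
    ∀ᵐ x ∂volume, x ∈ Set.Icc (Em j) (Ep j) →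
      C⁻¹ < ρ x / ((x - Em j) ^ tm * (Ep j - x) ^ tp) ∧
      ρ x / ((x - Em j) ^ tm * (Ep j - x) ^ tp) < C

/-- The subordination function `ω_t` for the free convolution semi-group,
together with its continuous extension to `ℂ⁺ ∪ ℝ`. -/
structure IsSubordT (μ : Measure ℝ) (t : ℝ) (ω : ℂ → ℂ) : Prop where
  diff : DifferentiableOn ℂ ω UHP
  maps : ∀ z ∈ UHP, ω z ∈ UHP
  imLe : ∀ z ∈ UHP, z.im ≤ (ω z).im
  limTop : Tendsto (fun η : ℝ => ω ((η : ℂ) * Complex.I) / ((η : ℂ) * Complex.I))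
      atTop (𝓝 1)
  eqn : ∀ z ∈ UHP, (t : ℂ) * ω z - z = ((t : ℂ) - 1) * nrT μ (ω z)
  cont : ContinuousOn ω CUHP

/-- `μt = μ^{⊞ t}`: the probability measure whose negative reciprocal Cauchy–Stieltjes
transform is `F_μ ∘ ω_t`, i.e. whose Cauchy–Stieltjes transform is `m_μ ∘ ω_t`. -/
def IsFreePow (μ : Measure ℝ) (ω : ℂ → ℂ) (μt : Measure ℝ) : Prop :=
  IsProbabilityMeasure μt ∧ ∀ z ∈ UHP, stT μt z = stT μ (ω z)

/-- Assumption 2 (for one of the two measures). -/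
structure Assumption2 (μ : Measure ℝ) (n : ℕ) (Am Ap : Fin n → ℝ) (ρ : ℝ → ℝ) : Prop where
  prob : IsProbabilityMeasure μ
  n_pos : 1 ≤ n
  centered : ∫ x, x ∂μ = 0
  ρ_nonneg : ∀ x, 0 ≤ ρ x
  ac : μ = volume.withDensity fun x => ENNReal.ofReal (ρ x)
  lt : ∀ j, Am j < Ap j
  ordered : ∀ i j : Fin n, i < j → Ap i < Am j
  supp_eq : msupp μ = ⋃ j, Set.Icc (Am j) (Ap j)
  power_law : ∀ j, ∃ sm sp C : ℝ, -1 < sm ∧ sm < 1 ∧ -1 < sp ∧ sp < 1 ∧ 1 ≤ C ∧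
    ∀ᵐ x ∂volume, x ∈ Set.Icc (Am j) (Ap j) →
      C⁻¹ < ρ x / ((x - Am j) ^ sm * (Ap j - x) ^ sp) ∧
      ρ x / ((x - Am j) ^ sm * (Ap j - x) ^ sp) < C

/-- The pair of subordination functions for the free additive convolution `μa ⊞ μb`. -/
structure IsSubordPair (μa μb : Measure ℝ) (ωa ωb : ℂ → ℂ) : Prop where
  diff_a : DifferentiableOn ℂ ωa UHP
  diff_b : DifferentiableOn ℂ ωb UHP
  maps_a : ∀ z ∈ UHP, ωa z ∈ UHP
  maps_b : ∀ z ∈ UHP, ωb z ∈ UHP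
  imLe_a : ∀ z ∈ UHP, z.im ≤ (ωa z).im
  imLe_b : ∀ z ∈ UHP, z.im ≤ (ωb z).im
  lim_a : Tendsto (fun η : ℝ => ωa ((η : ℂ) * Complex.I) / ((η : ℂ) * Complex.I))
      atTop (𝓝 1)
  lim_b : Tendsto (fun η : ℝ => ωb ((η : ℂ) * Complex.I) / ((η : ℂ) * Complex.I))
      atTop (𝓝 1)
  eqn_a : ∀ z ∈ UHP, ωa z + ωb z - z = nrT μa (ωb z)
  eqn_b : ∀ z ∈ UHP, ωa z + ωb z - z = nrT μb (ωa z)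

/-- `μab = μa ⊞ μb`: the probability measure whose negative reciprocal Cauchy–Stieltjes
transform is `F_{μa} ∘ ω_b`, i.e. whose Cauchy–Stieltjes transform is `m_{μa} ∘ ω_b`. -/
def IsFreeConv (μa μb : Measure ℝ) (ωb : ℂ → ℂ) (μab : Measure ℝ) : Prop :=
  IsProbabilityMeasure μab ∧ ∀ z ∈ UHP, stT μab z = stT μa (ωb z)

/-- `Ω` is the continuous extension of `ω` to `ℂ⁺ ∪ ℝ`, with values in the
Riemann sphere `ℂ ∪ {∞}`. -/
def ExtendsToRP (ω : ℂ → ℂ) (Ω : ℂ → OnePoint ℂ) : Prop :=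
  ContinuousOn Ω CUHP ∧ ∀ z ∈ UHP, Ω z = (ω z : OnePoint ℂ)

/-- `μhat` is the measure in the Nevanlinna representation
`F_μ(ω) − ω = −∫ x dμ + ∫ 1/(x−ω) dμ̂(x)`. -/
def IsNevanHat (μ μhat : Measure ℝ) : Prop :=
  IsFiniteMeasure μhat ∧ ∀ z ∈ UHP,
    nrT μ z - z = -((∫ x, x ∂μ : ℝ) : ℂ) + ∫ x, ((x : ℂ) - z)⁻¹ ∂μhat

end

/-!
Let `ε > 0` be the distance from `E` to `supp μ`. Since `m_μ(E) = 0`, the difference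
`m_μ(w) − m_μ(E)` gives `|m_μ(w)| ≤ 2|w − E|/ε²` for `|w − E| ≤ ε/2`. On the other hand, the
imaginary part of the subordination equation at `w = ω_t(z)`, `z ∈ ℂ⁺`, reads
`(t Im w − Im z) |m_μ(w)|² = (t − 1) Im m_μ(w) = (t − 1) Im w · I_μ(w)`, and `I_μ(w) ≥ L⁻²` when
`supp μ` lies within distance `L` of `w`; as `Im z > 0` this gives `|m_μ(w)|² > (t − 1)/(t L²)`.
So `ω_t(ℂ⁺)` avoids a disc around `E`, and by continuity so does `ω_t(ℝ)`.
-/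

lemma exists_measure_Ioo_eq_zero_of_notMem_msupp {μ : Measure ℝ} {E : ℝ} (hE : E ∉ msupp μ) :
    ∃ ε > 0, μ (Ioo (E - ε) (E + ε)) = 0 := by
  simpa only [msupp, mem_ofPred_eq, not_forall, not_lt, nonpos_iff_eq_zero, exists_prop] using hE

lemma ae_mem_msupp (μ : Measure ℝ) : ∀ᵐ x ∂μ, x ∈ msupp μ := by
  refine measure_null_of_locally_null _ fun x hx => ?_
  obtain ⟨ε, hε, hx⟩ := exists_measure_Ioo_eq_zero_of_notMem_msupp hx
  exact ⟨_, mem_nhdsWithin_of_mem_nhds (Ioo_mem_nhds (by linarith) (by linarith)), hx⟩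

lemma exists_ae_abs_sub_mem_Icc {μ : Measure ℝ} (hμ : IsCompact (msupp μ)) {E : ℝ}
    (hE : E ∉ msupp μ) : ∃ ε > 0, ∃ K > 0, ∀ᵐ x ∂μ, |x - E| ∈ Icc ε K := by
  obtain ⟨ε, hε, hgap⟩ := exists_measure_Ioo_eq_zero_of_notMem_msupp hE
  obtain ⟨R, hR⟩ := isBounded_iff_forall_norm_le.mp hμ.isBounded
  refine ⟨ε, hε, max (R + |E|) 1, by positivity, ?_⟩
  rw [← Real.ball_eq_Ioo] at hgap
  filter_upwards [ae_mem_msupp μ, measure_eq_zero_iff_ae_notMem.mp hgap] with x hsupp hx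
  refine ⟨by simpa [Real.dist_eq] using hx, le_max_of_le_left ?_⟩
  linarith [abs_sub x E, Real.norm_eq_abs x ▸ hR x hsupp]

lemma stT_ofReal (μ : Measure ℝ) (E : ℝ) : stT μ E = stTR μ E := by
  simp only [stT, stTR, ← integral_complex_ofReal, Complex.ofReal_inv, Complex.ofReal_sub]

lemma im_le_norm_ofReal_sub (x : ℝ) (w : ℂ) : w.im ≤ ‖(x : ℂ) - w‖ := by
  calc w.im ≤ |((x : ℂ) - w).im| := by simp [le_abs_self]
    _ ≤ ‖(x : ℂ) - w‖ := Complex.abs_im_le_norm _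

lemma integrable_inv_ofReal_sub {μ : Measure ℝ} [IsFiniteMeasure μ] {w : ℂ} {r : ℝ}
    (hr : 0 < r) (h : ∀ᵐ x : ℝ ∂μ, r ≤ ‖(x : ℂ) - w‖) :
    Integrable (fun x : ℝ => ((x : ℂ) - w)⁻¹) μ := by
  refine (integrable_const r⁻¹).mono' (by fun_prop) ?_
  filter_upwards [h] with x hx
  rw [norm_inv]
  exact inv_anti₀ hr hx

lemma norm_stT_le_of_stTR_eq_zero {μ : Measure ℝ} [IsProbabilityMeasure μ] {E ε : ℝ}
    (hε : 0 < ε) (hgap : ∀ᵐ x ∂μ, ε ≤ |x - E|) (hE : stTR μ E = 0) {w : ℂ}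
    (hw : ‖w - E‖ ≤ ε / 2) : ‖stT μ w‖ ≤ 2 * ‖w - E‖ / ε ^ 2 := by
  have hgapE : ∀ᵐ x : ℝ ∂μ, ε ≤ ‖(x : ℂ) - E‖ := by
    simpa only [← Complex.ofReal_sub, Complex.norm_real, Real.norm_eq_abs] using hgap
  have hgapw : ∀ᵐ x : ℝ ∂μ, ε / 2 ≤ ‖(x : ℂ) - w‖ := by
    filter_upwards [hgapE] with x hx
    linarith [norm_sub_le_norm_sub_add_norm_sub (x : ℂ) w E]
  have hdiff : stT μ w = ∫ x, (((x : ℂ) - w)⁻¹ - ((x : ℂ) - E)⁻¹) ∂μ := by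
    rw [integral_sub (integrable_inv_ofReal_sub (by positivity) hgapw)
      (integrable_inv_ofReal_sub hε hgapE)]
    change stT μ w = stT μ w - stT μ E
    rw [stT_ofReal, hE, Complex.ofReal_zero, sub_zero]
  have hbound : ∀ᵐ x : ℝ ∂μ, ‖((x : ℂ) - w)⁻¹ - ((x : ℂ) - E)⁻¹‖ ≤ 2 * ‖w - E‖ / ε ^ 2 := by
    filter_upwards [hgapw, hgapE] with x hxw hxE
    have hxw₀ : (x : ℂ) - w ≠ 0 := norm_pos_iff.mp (by linarith)
    have hxE₀ : (x : ℂ) - E ≠ 0 := norm_pos_iff.mp (by linarith)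
    rw [inv_sub_inv hxw₀ hxE₀, sub_sub_sub_cancel_left, norm_div, norm_mul]
    calc ‖w - E‖ / (‖(x : ℂ) - w‖ * ‖(x : ℂ) - E‖) ≤ ‖w - E‖ / (ε / 2 * ε) := by gcongr
      _ = 2 * ‖w - E‖ / ε ^ 2 := by field_simp
  simpa [hdiff] using norm_integral_le_of_norm_le_const hbound

lemma im_inv_ofReal_sub (x : ℝ) (w : ℂ) :
    ((x : ℂ) - w)⁻¹.im = w.im * (Complex.normSq ((x : ℂ) - w))⁻¹ := by
  simp [Complex.inv_im, div_eq_mul_inv]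

lemma im_stT_eq_mul_Ifun {μ : Measure ℝ} [IsFiniteMeasure μ] {w : ℂ} (hw : 0 < w.im) :
    (stT μ w).im = w.im * Ifun μ w := by
  have hint := integrable_inv_ofReal_sub (μ := μ) hw
    (Eventually.of_forall fun x => im_le_norm_ofReal_sub x w)
  rw [stT, Ifun, ← integral_const_mul, ← RCLike.im_to_complex, ← integral_im hint]
  simp only [RCLike.im_to_complex, im_inv_ofReal_sub]

lemma inv_sq_le_Ifun {μ : Measure ℝ} [IsProbabilityMeasure μ] {w : ℂ} (hw : 0 < w.im) {L : ℝ}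
    (hL : ∀ᵐ x : ℝ ∂μ, ‖(x : ℂ) - w‖ ≤ L) : (L ^ 2)⁻¹ ≤ Ifun μ w := by
  have hlow (x : ℝ) : w.im ^ 2 ≤ Complex.normSq ((x : ℂ) - w) := by
    rw [Complex.normSq_eq_norm_sq]
    exact pow_le_pow_left₀ hw.le (im_le_norm_ofReal_sub x w) 2
  have hint : Integrable (fun x : ℝ => (Complex.normSq ((x : ℂ) - w))⁻¹) μ :=
    (integrable_const (w.im ^ 2)⁻¹).mono' (by fun_prop) (Eventually.of_forall fun x => by
      rw [Real.norm_of_nonneg (inv_nonneg.2 (Complex.normSq_nonneg _))]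
      exact inv_anti₀ (by positivity) (hlow x))
  calc (L ^ 2)⁻¹ = ∫ _, (L ^ 2)⁻¹ ∂μ := by simp
    _ ≤ Ifun μ w := by
      refine integral_mono_ae (integrable_const _) hint ?_
      filter_upwards [hL] with x hx
      refine inv_anti₀ (by linarith [hlow x, sq_pos_of_pos hw]) ?_
      rw [Complex.normSq_eq_norm_sq]
      exact pow_le_pow_left₀ (norm_nonneg _) hx 2

lemma im_mul_normSq_of_subordination_eqn {t : ℝ} {z w m : ℂ} (hm : m ≠ 0)
    (h : (t : ℂ) * w - z = ((t : ℂ) - 1) * -m⁻¹) :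
    (t * w.im - z.im) * Complex.normSq m = (t - 1) * m.im := by
  have him := congrArg Complex.im h
  simp only [Complex.sub_im, Complex.mul_im, Complex.ofReal_re, Complex.ofReal_im,
    Complex.neg_re, Complex.neg_im, Complex.inv_re, Complex.inv_im, Complex.sub_re,
    Complex.one_re, Complex.one_im, zero_mul, add_zero, sub_zero] at him
  have hN : Complex.normSq m ≠ 0 := Complex.normSq_pos.2 hm |>.ne'
  rw [him]
  field_simp

lemma IsSubordT.lt_normSq_stT {μ : Measure ℝ} [IsFiniteMeasure μ] {t : ℝ} {ω : ℂ → ℂ}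
    (hω : IsSubordT μ t ω) (ht : 1 < t) {z : ℂ} (hz : z ∈ UHP) {c : ℝ} (hc : 0 < c)
    (hI : c ≤ Ifun μ (ω z)) : (t - 1) * c / t < Complex.normSq (stT μ (ω z)) := by
  have hw : 0 < (ω z).im := hω.maps z hz
  have hzim : 0 < z.im := hz
  have him : c * (ω z).im ≤ (stT μ (ω z)).im := by
    rw [im_stT_eq_mul_Ifun hw, mul_comm]
    exact mul_le_mul_of_nonneg_left hI hw.le
  have hm : stT μ (ω z) ≠ 0 := fun h0 => by
    rw [h0, Complex.zero_im] at him
    nlinarith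
  have heqn := im_mul_normSq_of_subordination_eqn hm (hω.eqn z hz)
  have hN := Complex.normSq_pos.2 hm
  rw [div_lt_iff₀ (by linarith)]
  nlinarith [mul_pos hzim hN, mul_le_mul_of_nonneg_left him (by linarith : (0 : ℝ) ≤ t - 1)]

lemma IsSubordT.exists_pos_le_norm_sub {μ : Measure ℝ} [IsProbabilityMeasure μ]
    (hμ : IsCompact (msupp μ)) {t : ℝ} (ht : 1 < t) {ω : ℂ → ℂ} (hω : IsSubordT μ t ω)
    {E : ℝ} (hE : E ∉ msupp μ) (hE₀ : stTR μ E = 0) :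
    ∃ δ > 0, ∀ z ∈ UHP, δ ≤ ‖ω z - E‖ := by
  obtain ⟨ε, hε, K, hK, hae⟩ := exists_ae_abs_sub_mem_Icc hμ hE
  set a := (t - 1) * ((K + ε / 2) ^ 2)⁻¹ / t
  have ha : 0 < a := div_pos (mul_pos (by linarith) (by positivity)) (by linarith)
  refine ⟨min (ε / 2) (ε ^ 2 * √a / 2), by positivity, fun z hz => ?_⟩
  rcases le_or_gt ‖ω z - E‖ (ε / 2) with hnear | hfar
  · have hupper := norm_stT_le_of_stTR_eq_zero hε (hae.mono fun x hx => hx.1) hE₀ hnear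
    have hdist : ∀ᵐ x : ℝ ∂μ, ‖(x : ℂ) - ω z‖ ≤ K + ε / 2 := by
      filter_upwards [hae] with x hx
      have hxE : ‖(x : ℂ) - E‖ = |x - E| := by
        rw [← Complex.ofReal_sub, Complex.norm_real, Real.norm_eq_abs]
      linarith [hx.2, norm_sub_le_norm_sub_add_norm_sub (x : ℂ) E (ω z),
        norm_sub_rev (ω z) (E : ℂ)]
    have hlower := hω.lt_normSq_stT ht hz (by positivity) (inv_sq_le_Ifun (hω.maps z hz) hdist)
    rw [Complex.normSq_eq_norm_sq] at hlower
    have hsqrt : √a < ‖stT μ (ω z)‖ := by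
      simpa [Real.sqrt_sq (norm_nonneg _)] using Real.sqrt_lt_sqrt ha.le hlower
    refine min_le_of_right_le ?_
    rw [div_le_iff₀ two_pos]
    have := hsqrt.trans_le hupper
    rw [lt_div_iff₀ (by positivity)] at this
    linarith
  · exact min_le_of_left_le hfar.le

lemma ContinuousOn.le_norm_sub_of_forall_mem_UHP {f : ℂ → ℂ} (hf : ContinuousOn f CUHP)
    {c : ℂ} {δ : ℝ} (h : ∀ z ∈ UHP, δ ≤ ‖f z - c‖) {z : ℂ} (hz : z ∈ CUHP) :
    δ ≤ ‖f z - c‖ := by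
  have hclosure : closure UHP = CUHP := Complex.closure_setOfPred_lt_im 0
  rw [← hclosure] at hf hz
  have hclosed : IsClosed {y : ℂ | δ ≤ ‖y - c‖} := isClosed_le continuous_const (by fun_prop)
  exact closure_minimal (t := {y : ℂ | δ ≤ ‖y - c‖}) (image_subset_iff.2 h) hclosed
    (hf.image_closure (mem_image_of_mem f hz))

/-- The subordination function `ω_t` stays at positive distance from
every zero of `m_μ` lying outside the support of `μ`. -/
theorem subordination_away_from_zeros
    (μ : Measure ℝ) (nac npp nppout : ℕ)
    (Em Ep : Fin nac → ℝ) (atom : Fin npp → ℝ) (ρ : ℝ → ℝ)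
    (hμ : Assumption1 μ nac npp nppout Em Ep atom ρ)
    (t : ℝ) (ht : 1 < t) (ω : ℂ → ℂ) (hω : IsSubordT μ t ω)
    (E : ℝ) (hE₁ : E ∉ msupp μ) (hE₂ : stTR μ E = 0) :
    ∃ M : ℝ, 0 < M ∧ ∀ x : ℝ, M ≤ ‖ω (x : ℂ) - (E : ℂ)‖ := by
  have := hμ.prob
  obtain ⟨δ, hδ, hUHP⟩ := hω.exists_pos_le_norm_sub hμ.compact ht hE₁ hE₂
  exact ⟨δ, hδ, fun x => hω.cont.le_norm_sub_of_forall_mem_UHP hUHP (by simp [CUHP])⟩
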